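/- Given a fractional coloring γ of a finite graph G that attains the fractional chromatic number but has a vertex x with ∑_{S∈I(G,x)} γ(S) = 1 + ν for some ν > 0, then there exists an independent set S₀ containing x with S₀ ≠ {x} and γ(S₀) > 0, and shifting weight μ = min(ν, γ(S₀)) from S₀ to S₀ \ {x} yields another optimal fractional coloring with strictly smaller total excess ∑_{x∈X}(−1 + ∑_{S∈I(G,x)} γ(S)). -/

import Mathlib

open Finset

variable {V : Type*} [Fintype V] [DecidableEq V]

/-- `S` is an independent set of the graph `G`. -/
def IndepSet (G : SimpleGraph V) (S : Finset V) : Prop :=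
  ∀ x ∈ S, ∀ y ∈ S, ¬ G.Adj x y

/-- The total weight covering the vertex `x`: the sum of `γ` over the independent sets
containing `x`. -/
instance (G : SimpleGraph V) [DecidableRel G.Adj] (S : Finset V) :
    Decidable (IndepSet G S) := by unfold IndepSet; infer_instance

def cover (G : SimpleGraph V) [DecidableRel G.Adj] (γ : Finset V → ℝ) (x : V) : ℝ :=
  ∑ S ∈ univ.filter (fun S : Finset V => x ∈ S ∧ IndepSet G S), γ S

/-!
Since `γ {x} ≤ 1 < cover G γ x`, some independent set `S₀ ∋ x` other than `{x}` carries
positive weight. Moving `μ = min ν (γ S₀)` from `S₀` to `S₀ \ {x}` keeps the total weight,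
keeps the weights nonnegative (`μ ≤ γ S₀`) and changes the covering weight of `x` alone,
lowering it by `μ ≤ ν` to at least `1`. Hence the total excess drops by exactly `μ > 0`.
-/

namespace IndepSet

variable {G : SimpleGraph V}

omit [Fintype V] [DecidableEq V] in
theorem mono {S T : Finset V} (hS : IndepSet G S) (hTS : T ⊆ S) : IndepSet G T :=
  fun a ha b hb => hS a (hTS ha) b (hTS hb)

omit [Fintype V] [DecidableEq V] in
theorem singleton (x : V) : IndepSet G {x} := by
  intro a ha b hb
  rw [mem_singleton] at ha hb
  subst ha hb
  exact G.irrefl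

end IndepSet

def transfer (γ : Finset V → ℝ) (S T : Finset V) (μ : ℝ) (R : Finset V) : ℝ :=
  γ R - (if R = S then μ else 0) + (if R = T then μ else 0)

section Transfer

variable (γ : Finset V → ℝ) {S T : Finset V} (μ : ℝ)

omit [Fintype V] in
theorem transfer_eq_ite (hST : S ≠ T) :
    transfer γ S T μ =
      fun R => if R = S then γ R - μ else if R = T then γ R + μ else γ R := by
  funext R
  by_cases hRS : R = S
  · subst hRS
    simp [transfer, hST]
  · by_cases hRT : R = T
    · subst hRT
      simp [transfer, hRS]
    · simp [transfer, hRS, hRT]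

theorem sum_transfer : ∑ R, transfer γ S T μ R = ∑ R, γ R := by
  simp only [transfer, sum_add_distrib, sum_sub_distrib, sum_ite_eq', mem_univ, if_true]
  ring

omit [Fintype V] in
theorem transfer_nonneg (hγ : ∀ R, 0 ≤ γ R) (hμ : 0 ≤ μ) (hμS : μ ≤ γ S) (R : Finset V) :
    0 ≤ transfer γ S T μ R := by
  unfold transfer
  have := hγ R
  split_ifs with hRS <;> (try subst hRS) <;> linarith

variable {G : SimpleGraph V}

omit [Fintype V] in
theorem transfer_eq_zero_of_not_indepSet (hγ : ∀ R, ¬ IndepSet G R → γ R = 0)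
    (hS : IndepSet G S) (hT : IndepSet G T) {R : Finset V} (hR : ¬ IndepSet G R) :
    transfer γ S T μ R = 0 := by
  have hRS : R ≠ S := by rintro rfl; exact hR hS
  have hRT : R ≠ T := by rintro rfl; exact hR hT
  simp [transfer, hRS, hRT, hγ R hR]

theorem cover_transfer [DecidableRel G.Adj] (hS : IndepSet G S) (hT : IndepSet G T) (y : V) :
    cover G (transfer γ S T μ) y =
      cover G γ y - (if y ∈ S then μ else 0) + (if y ∈ T then μ else 0) := by
  simp [cover, transfer, sum_add_distrib, sum_sub_distrib, sum_ite_eq', hS, hT]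

theorem cover_transfer_erase [DecidableRel G.Adj] {x : V} (hxS : x ∈ S) (hS : IndepSet G S) (y : V) :
    cover G (transfer γ S (S.erase x) μ) y = cover G γ y - if y = x then μ else 0 := by
  rw [cover_transfer γ μ hS (hS.mono (erase_subset x S))]
  by_cases hyx : y = x
  · subst hyx
    simp [hxS]
  · by_cases hyS : y ∈ S <;> simp [hyx, hyS]

end Transfer

variable {G : SimpleGraph V} [DecidableRel G.Adj]

theorem exists_indepSet_ne_singleton_pos {γ : Finset V → ℝ} {x : V}
    (hsingle : γ {x} ≤ 1) (hx : 1 < cover G γ x) :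
    ∃ S, x ∈ S ∧ IndepSet G S ∧ S ≠ {x} ∧ 0 < γ S := by
  by_contra! h
  have hle : ∀ S ∈ univ.filter (fun S : Finset V => x ∈ S ∧ IndepSet G S),
      γ S ≤ if S = {x} then γ {x} else 0 := by
    intro S hS
    rw [mem_filter] at hS
    split_ifs with hSx
    · rw [hSx]
    · exact h S hS.2.1 hS.2.2 hSx
  have hcover : cover G γ x ≤ γ {x} := by
    calc cover G γ x ≤ ∑ S ∈ univ.filter (fun S : Finset V => x ∈ S ∧ IndepSet G S),
          if S = {x} then γ {x} else 0 := sum_le_sum hle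
      _ = γ {x} := by simp [IndepSet.singleton]
  linarith

theorem sum_excess_transfer_erase (γ : Finset V → ℝ) {S : Finset V} {x : V} (μ : ℝ)
    (hxS : x ∈ S) (hS : IndepSet G S) :
    ∑ y, (-1 + cover G (transfer γ S (S.erase x) μ) y) = ∑ y, (-1 + cover G γ y) - μ := by
  simp only [cover_transfer_erase γ μ hxS hS, add_sub_assoc', sum_sub_distrib, sum_ite_eq',
    mem_univ, if_true]

theorem stmt_1 (G : SimpleGraph V) [DecidableRel G.Adj] (γ : Finset V → ℝ)
    (hnonneg : ∀ S, 0 ≤ γ S)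
    (hzero : ∀ S : Finset V, ¬ IndepSet G S → γ S = 0)
    (hfeas : ∀ y : V, 1 ≤ cover G γ y)
    (x : V) (ν : ℝ) (hν : 0 < ν) (hx : cover G γ x = 1 + ν)
    (hsingle : γ {x} ≤ 1) :
    ∃ S₀ : Finset V, x ∈ S₀ ∧ IndepSet G S₀ ∧ S₀ ≠ {x} ∧ 0 < γ S₀ ∧
      ∀ γ' : Finset V → ℝ,
        (γ' = fun S => if S = S₀ then γ S - min ν (γ S₀)
          else if S = S₀.erase x then γ S + min ν (γ S₀) else γ S) →
        (∀ S, 0 ≤ γ' S) ∧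
        (∀ S : Finset V, ¬ IndepSet G S → γ' S = 0) ∧
        (∀ y : V, 1 ≤ cover G γ' y) ∧
        (∑ S : Finset V, γ' S = ∑ S : Finset V, γ S) ∧
        (∑ y : V, (-1 + cover G γ' y)) < ∑ y : V, (-1 + cover G γ y) := by
  obtain ⟨S₀, hxS₀, hS₀, hS₀x, hS₀pos⟩ :=
    exists_indepSet_ne_singleton_pos hsingle (by linarith : 1 < cover G γ x)
  refine ⟨S₀, hxS₀, hS₀, hS₀x, hS₀pos, ?_⟩
  rintro _ rfl
  set μ := min ν (γ S₀)
  have hμ : 0 < μ := lt_min hν hS₀pos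
  rw [← transfer_eq_ite γ μ (erase_ne_self.mpr hxS₀).symm]
  refine ⟨transfer_nonneg γ μ hnonneg hμ.le (min_le_right _ _),
    fun R => transfer_eq_zero_of_not_indepSet γ μ hzero hS₀ (hS₀.mono (erase_subset x S₀)),
    fun y => ?_, sum_transfer γ μ, ?_⟩
  · rw [cover_transfer_erase γ μ hxS₀ hS₀]
    split_ifs with hyx
    · have : μ ≤ ν := min_le_left _ _
      rw [hyx, hx]
      linarith
    · simpa using hfeas y
  · rw [sum_excess_transfer_erase γ μ hxS₀ hS₀]
    linarith
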